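/- Calculus lemma (Li–Zhang, form (ii)): let n ≥ 1, ν ∈ ℝ, u ∈ C¹(ℝⁿ). If for every x₀ ∈ ℝⁿ and every λ > 0 one has (λ/|x-x₀|)^{ν} u(x₀ + λ²(x-x₀)/|x-x₀|²) ≥ u(x) for all x ∈ B_λ(x₀) \ {x₀}, then u is constant. -/

import Mathlib

/-!
Given `a ≠ b` and any `k > 1`, the center `x₀` can be placed on the line through `a` and `b`,
beyond `a`, so that the inversion in the sphere of radius `λ = √k ‖a - x₀‖` about `x₀` (which
contains `a` in its interior) sends `a` to `b`. The hypothesis then reads `u a ≤ √k ^ ν * u b`,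
and letting `k → 1` gives `u a ≤ u b`.
-/

open Filter Topology

section

variable {E : Type*} [NormedAddCommGroup E] [NormedSpace ℝ E]

/-- The transform `u_{x₀,λ}` of the paper. -/
noncomputable def kelvinTransform (ν : ℝ) (u : E → ℝ) (x₀ : E) (lam : ℝ) (x : E) : ℝ :=
  (lam / ‖x - x₀‖) ^ ν * u (x₀ + (lam ^ 2 / ‖x - x₀‖ ^ 2) • (x - x₀))

theorem kelvinTransform_sqrt_mul_norm (ν : ℝ) (u : E → ℝ) {x₀ x : E} (hx : x ≠ x₀) {k : ℝ}
    (hk : 0 ≤ k) :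
    kelvinTransform ν u x₀ (√k * ‖x - x₀‖) x = √k ^ ν * u (x₀ + k • (x - x₀)) := by
  have hx' : ‖x - x₀‖ ≠ 0 := norm_ne_zero_iff.2 (sub_ne_zero.2 hx)
  rw [kelvinTransform, mul_pow, Real.sq_sqrt hk, mul_div_assoc, mul_div_assoc, div_self hx',
    div_self (pow_ne_zero 2 hx'), mul_one, mul_one]

theorem exists_center_add_smul_sub_eq {a b : E} (hab : a ≠ b) {k : ℝ} (hk : 1 < k) :
    ∃ x₀, a ≠ x₀ ∧ x₀ + k • (a - x₀) = b := by
  have hk₁ : k - 1 ≠ 0 := (sub_pos.2 hk).ne'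
  refine ⟨a - (k - 1)⁻¹ • (b - a), ?_, ?_⟩
  · rw [ne_comm, Ne, sub_eq_self, smul_eq_zero, not_or]
    exact ⟨inv_ne_zero hk₁, sub_ne_zero.2 hab.symm⟩
  · have hcoef : k * (k - 1)⁻¹ = 1 + (k - 1)⁻¹ := by field_simp; ring
    rw [sub_sub_cancel, smul_smul, hcoef, add_smul, one_smul]
    abel

theorem le_of_forall_le_kelvinTransform {ν : ℝ} {u : E → ℝ}
    (h : ∀ x₀ lam, 0 < lam → ∀ x, x ≠ x₀ → ‖x - x₀‖ < lam →
      u x ≤ kelvinTransform ν u x₀ lam x)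
    (a b : E) : u a ≤ u b := by
  rcases eq_or_ne a b with rfl | hab
  · rfl
  have hle : ∀ k : ℝ, 1 < k → u a ≤ √k ^ ν * u b := by
    intro k hk
    obtain ⟨x₀, hax₀, hx₀⟩ := exists_center_add_smul_sub_eq hab hk
    have hnorm : 0 < ‖a - x₀‖ := norm_pos_iff.2 (sub_ne_zero.2 hax₀)
    have hsqrt : 1 < √k := Real.lt_sqrt_of_sq_lt (by simpa using hk)
    have := h x₀ (√k * ‖a - x₀‖) (by positivity) a hax₀ (lt_mul_of_one_lt_left hnorm hsqrt)
    rwa [kelvinTransform_sqrt_mul_norm ν u hax₀ (by linarith), hx₀] at this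
  have hlim : Tendsto (fun k : ℝ => √k ^ ν * u b) (𝓝[>] 1) (𝓝 (u b)) := by
    have hcont : ContinuousAt (fun k : ℝ => √k ^ ν * u b) 1 :=
      (Real.continuous_sqrt.continuousAt.rpow_const (Or.inl (by simp))).mul continuousAt_const
    simpa using hcont.tendsto.mono_left nhdsWithin_le_nhds
  exact ge_of_tendsto hlim (eventually_nhdsWithin_of_forall hle)

end

theorem stmt_15 (n : ℕ) (ν : ℝ)
    (u : EuclideanSpace ℝ (Fin n) → ℝ)
    (hdom : ∀ (x₀ : EuclideanSpace ℝ (Fin n)) (lam : ℝ), 0 < lam →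
      ∀ x, x ≠ x₀ → ‖x - x₀‖ < lam →
        u x ≤ (lam / ‖x - x₀‖) ^ ν *
          u (x₀ + (lam ^ 2 / ‖x - x₀‖ ^ 2) • (x - x₀))) :
    ∃ c : ℝ, ∀ x, u x = c :=
  ⟨u 0, fun x => le_antisymm (le_of_forall_le_kelvinTransform hdom x 0)
    (le_of_forall_le_kelvinTransform hdom 0 x)⟩
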